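/- Let f, g be quadratic polynomials with f ≠ g, let δ > 0, and let I = [-10,10]. Then the set A_δ = {s ∈ [-5/2, 5/2] : |f(s)-g(s)| ≤ δ} is the union of at most two intervals, each of length at most C·δ/√((τ(f,g)+δ)(Δ(f,g)+δ)) for an absolute constant C, where τ and Δ are the gauges defined over I. -/
import Mathlib


/-- The quadratic with coefficients (a,b,c). -/
def quadF (a b c s : ℝ) : ℝ := a * s ^ 2 + b * s + c

/-- The gauge τ(f,g) for quadratics over I = [-10,10]. -/
noncomputable def tauQ (a₁ b₁ c₁ a₂ b₂ c₂ : ℝ) : ℝ :=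
  ⨆ θ : Set.Icc (-10 : ℝ) 10,
    (|quadF a₁ b₁ c₁ θ - quadF a₂ b₂ c₂ θ| +
      |(2 * a₁ * θ + b₁) - (2 * a₂ * θ + b₂)| + |2 * a₁ - 2 * a₂|)

/-- The tangency gauge Δ(f,g) for quadratics over I = [-10,10]. -/
noncomputable def deltaQ (a₁ b₁ c₁ a₂ b₂ c₂ : ℝ) : ℝ :=
  ⨅ θ : Set.Icc (-10 : ℝ) 10,
    (|quadF a₁ b₁ c₁ θ - quadF a₂ b₂ c₂ θ| + |(2 * a₁ * θ + b₁) - (2 * a₂ * θ + b₂)|)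

lemma quad_diff (a₁ b₁ c₁ a₂ b₂ c₂ s : ℝ) :
    quadF a₁ b₁ c₁ s - quadF a₂ b₂ c₂ s = (a₁-a₂)*s^2+(b₁-b₂)*s+(c₁-c₂) := by
  unfold quadF; ring

lemma tauQ_comm (a₁ b₁ c₁ a₂ b₂ c₂ : ℝ) :
    tauQ a₁ b₁ c₁ a₂ b₂ c₂ = tauQ a₂ b₂ c₂ a₁ b₁ c₁ := by
  unfold tauQ
  congr 1
  funext θ
  rw [abs_sub_comm (quadF a₁ b₁ c₁ θ), abs_sub_comm (2*a₁*(θ:ℝ)+b₁), abs_sub_comm (2*a₁)]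

lemma deltaQ_comm (a₁ b₁ c₁ a₂ b₂ c₂ : ℝ) :
    deltaQ a₁ b₁ c₁ a₂ b₂ c₂ = deltaQ a₂ b₂ c₂ a₁ b₁ c₁ := by
  unfold deltaQ
  congr 1
  funext θ
  rw [abs_sub_comm (quadF a₁ b₁ c₁ θ), abs_sub_comm (2*a₁*(θ:ℝ)+b₁)]

lemma deltaQ_nonneg (a₁ b₁ c₁ a₂ b₂ c₂ : ℝ) : 0 ≤ deltaQ a₁ b₁ c₁ a₂ b₂ c₂ := by
  have : Nonempty (Set.Icc (-10:ℝ) 10) := ⟨⟨0, by norm_num⟩⟩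
  exact le_ciInf fun θ => by positivity

lemma tauQ_nonneg (a₁ b₁ c₁ a₂ b₂ c₂ : ℝ) : 0 ≤ tauQ a₁ b₁ c₁ a₂ b₂ c₂ :=
  Real.iSup_nonneg fun θ => by positivity

lemma deltaQ_le (a₁ b₁ c₁ a₂ b₂ c₂ : ℝ) (θ : ℝ) (h1 : -10 ≤ θ) (h2 : θ ≤ 10) :
    deltaQ a₁ b₁ c₁ a₂ b₂ c₂ ≤
      |(a₁-a₂)*θ^2+(b₁-b₂)*θ+(c₁-c₂)| + |2*(a₁-a₂)*θ+(b₁-b₂)| := by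
  have h := ciInf_le (f := fun θ : Set.Icc (-10:ℝ) 10 =>
      |quadF a₁ b₁ c₁ θ - quadF a₂ b₂ c₂ θ| + |(2*a₁*(θ:ℝ)+b₁) - (2*a₂*(θ:ℝ)+b₂)|)
      ⟨0, by rintro z ⟨i, rfl⟩; positivity⟩ ⟨θ, h1, h2⟩
  rw [quad_diff] at h
  rw [show (2*a₁*θ+b₁) - (2*a₂*θ+b₂) = 2*(a₁-a₂)*θ+(b₁-b₂) by ring] at h
  exact h


lemma tau_pt (u v w δ x θ : ℝ) (hδ : 0 < δ) (hu : 0 ≤ u)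
    (hx1 : -(5/2) ≤ x) (hx2 : x ≤ 5/2)
    (hhx : |u*x^2+v*x+w| ≤ δ) (hbr : 0 ≤ 2*u*x+v)
    (hθ1 : -10 ≤ θ) (hθ2 : θ ≤ 10) :
    |u*θ^2+v*θ+w| + |2*u*θ+v| + 2*u ≤ δ + 14*(2*u*x+v) + 200*u := by
  obtain ⟨ha, hb⟩ := abs_le.mp hhx
  have hsq : (θ - x)^2 ≤ 169 := by nlinarith
  have h1 : |u*θ^2+v*θ+w| ≤ δ + 13*(2*u*x+v) + 169*u := by
    rw [abs_le]
    constructor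
    · nlinarith [mul_nonneg hu (sq_nonneg (θ - x)),
        mul_nonneg hbr (show (0:ℝ) ≤ θ - x + 13 by linarith)]
    · nlinarith [mul_le_mul_of_nonneg_left hsq hu,
        mul_nonneg hbr (show (0:ℝ) ≤ 13 - (θ - x) by linarith)]
  have h2 : |2*u*θ+v| ≤ (2*u*x+v) + 26*u := by
    rw [abs_le]
    constructor
    · nlinarith [mul_nonneg hu (show (0:ℝ) ≤ θ - x + 13 by linarith)]
    · nlinarith [mul_nonneg hu (show (0:ℝ) ≤ 13 - (θ - x) by linarith)]
  linarith


lemma poly1 (δ L D : ℝ) (hδ : 0 < δ) (hL0 : 0 ≤ L) (hL5 : L ≤ 5) (hD0 : 0 ≤ D)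
    (hLD : L*D ≤ 2*δ) :
    L^2*((2*δ+28*D)*(2*δ+D)) ≤ 10000*δ^2 := by
  have a1 : L^2 ≤ 25 := by nlinarith
  have a3 : (L*D)*(L*D) ≤ 4*δ^2 := by nlinarith [mul_nonneg hL0 hD0]
  have t1 : δ^2*L^2 ≤ 25*δ^2 := by nlinarith [sq_nonneg δ]
  have t2 : δ*(L*(L*D)) ≤ 10*δ^2 := by nlinarith [mul_nonneg hL0 hD0]
  nlinarith [t1, t2, a3]

lemma poly2 (δ L D u E : ℝ) (hδ : 0 < δ) (hL0 : 0 ≤ L) (hL5 : L ≤ 5) (hD0 : 0 ≤ D)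
    (hLD : L*D ≤ 2*δ) (huL : u*L^2 ≤ 2*δ) (hE15 : 4*E ≤ 15*D) (hE4 : 4*u*E = D^2) :
    L^2*((2*δ+14*D+200*u)*(2*δ+E)) ≤ 10000*δ^2 := by
  have a1 : L^2 ≤ 25 := by nlinarith
  have a2 : L*(L*D) ≤ 10*δ := by nlinarith [mul_nonneg hL0 hD0]
  have a3 : (L*D)*(L*D) ≤ 4*δ^2 := by nlinarith [mul_nonneg hL0 hD0]
  have t1 : δ^2*L^2 ≤ 25*δ^2 := by nlinarith [sq_nonneg δ]
  have t2 : δ*(L*(L*D)) ≤ 10*δ^2 := by nlinarith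
  have s2 : L^2*E ≤ (75/2)*δ := by
    calc L^2*E ≤ L^2*((15/4)*D) := by
          apply mul_le_mul_of_nonneg_left (by linarith) (sq_nonneg _)
      _ = (15/4)*(L*(L*D)) := by ring
      _ ≤ (15/4)*(10*δ) := by linarith
      _ = (75/2)*δ := by ring
  have t3 : δ*(L^2*E) ≤ (75/2)*δ^2 := by nlinarith
  have t4 : L^2*(D*E) ≤ 15*δ^2 := by
    have hDE : D*E ≤ (15/4)*D^2 := by nlinarith
    calc L^2*(D*E) ≤ L^2*((15/4)*D^2) :=
          mul_le_mul_of_nonneg_left hDE (sq_nonneg _)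
      _ = (15/4)*((L*D)*(L*D)) := by ring
      _ ≤ (15/4)*(4*δ^2) := by linarith
      _ = 15*δ^2 := by ring
  have t5 : δ*(u*L^2) ≤ 2*δ^2 := by nlinarith
  have t6 : (u*L^2)*E ≤ δ^2 := by
    have he : (u*L^2)*E = (4*u*E)*L^2/4 := by ring
    rw [he, hE4]
    calc D^2*L^2/4 = ((L*D)*(L*D))/4 := by ring
      _ ≤ (4*δ^2)/4 := by linarith
      _ = δ^2 := by ring
  nlinarith [t1, t2, t3, t4, t5, t6]

lemma key (u v w δ x y T Dl : ℝ) (hδ : 0 < δ) (hu : 0 ≤ u)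
    (hx1 : -(5/2) ≤ x) (hxy : x ≤ y) (hy2 : y ≤ 5/2)
    (hhx : |u*x^2+v*x+w| ≤ δ) (hhy : |u*y^2+v*y+w| ≤ δ)
    (hbr : 0 ≤ 2*u*x+v)
    (hT : T ≤ δ + 14*(2*u*x+v) + 200*u) (hT0 : 0 ≤ T)
    (hD : ∀ θ : ℝ, -10 ≤ θ → θ ≤ 10 → Dl ≤ |u*θ^2+v*θ+w| + |2*u*θ+v|)
    (hD0 : 0 ≤ Dl) :
    (y-x)^2 * ((T+δ)*(Dl+δ)) ≤ 10000*δ^2 := by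
  obtain ⟨hax, hbx⟩ := abs_le.mp hhx
  obtain ⟨hay, hby⟩ := abs_le.mp hhy
  obtain ⟨D, hDdef⟩ : ∃ D : ℝ, D = 2*u*x+v := ⟨_, rfl⟩
  rw [← hDdef] at hbr hT
  have hL0 : 0 ≤ y - x := by linarith
  have hL5 : y - x ≤ 5 := by linarith
  have hid : u*y^2+v*y+w - (u*x^2+v*x+w) = (y-x)*D + u*(y-x)^2 := by
    rw [hDdef]; ring
  have hsum : (y-x)*D + u*(y-x)^2 ≤ 2*δ := by linarith
  have hLD : (y-x)*D ≤ 2*δ := by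
    nlinarith [mul_nonneg hu (sq_nonneg (y-x))]
  have huL : u*(y-x)^2 ≤ 2*δ := by
    nlinarith [mul_nonneg hL0 hbr]
  rcases le_or_gt (15*u) D with hc | hc
  · -- far-from-vertex case
    have hDl : Dl ≤ δ + D := by
      have h := hD x (by linarith) (by linarith)
      rw [← hDdef, abs_of_nonneg hbr] at h
      linarith [hhx]
    have f1 : T + δ ≤ 2*δ + 28*D := by linarith
    have f2 : Dl + δ ≤ 2*δ + D := by linarith
    have g : (T+δ)*(Dl+δ) ≤ (2*δ+28*D)*(2*δ+D) :=
      mul_le_mul f1 f2 (by linarith) (by linarith)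
    calc (y-x)^2 * ((T+δ)*(Dl+δ)) ≤ (y-x)^2 * ((2*δ+28*D)*(2*δ+D)) :=
          mul_le_mul_of_nonneg_left g (sq_nonneg _)
      _ ≤ 10000*δ^2 := poly1 δ (y-x) D hδ hL0 hL5 hbr hLD
  · -- near-vertex case
    have hu' : 0 < u := by nlinarith
    obtain ⟨E, hEdef⟩ : ∃ E : ℝ, E = D^2/(4*u) := ⟨_, rfl⟩
    have hE : 4*u*E = D^2 := by
      rw [hEdef]; field_simp
    have hE0 : 0 ≤ E := by rw [hEdef]; positivity
    have hE15 : 4*E ≤ 15*D := by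
      nlinarith [mul_nonneg hbr (show (0:ℝ) ≤ 15*u - D by linarith)]
    have hθ1 : -10 ≤ x - D/(2*u) := by
      have : D/(2*u) ≤ 15/2 := by
        rw [div_le_iff₀ (by linarith)]; linarith
      linarith
    have hθ2 : x - D/(2*u) ≤ 10 := by
      have : 0 ≤ D/(2*u) := div_nonneg hbr (by linarith)
      linarith
    have hval : u*(x - D/(2*u))^2 + v*(x - D/(2*u)) + w = (u*x^2+v*x+w) - E := by
      rw [hEdef, hDdef]; field_simp; ring
    have hder : 2*u*(x - D/(2*u)) + v = 0 := by
      rw [hDdef]; field_simp; ring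
    have hDl : Dl ≤ δ + E := by
      have h := hD (x - D/(2*u)) hθ1 hθ2
      rw [hval, hder, abs_zero, add_zero] at h
      have h2 : |(u*x^2+v*x+w) - E| ≤ δ + E := abs_le.2 ⟨by linarith, by linarith⟩
      linarith
    have f1 : T + δ ≤ 2*δ + 14*D + 200*u := by linarith
    have f2 : Dl + δ ≤ 2*δ + E := by linarith
    have g : (T+δ)*(Dl+δ) ≤ (2*δ+14*D+200*u)*(2*δ+E) :=
      mul_le_mul f1 f2 (by linarith) (by linarith)
    calc (y-x)^2*((T+δ)*(Dl+δ)) ≤ (y-x)^2*((2*δ+14*D+200*u)*(2*δ+E)) :=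
          mul_le_mul_of_nonneg_left g (sq_nonneg _)
      _ ≤ 10000*δ^2 := poly2 δ (y-x) D u E hδ hL0 hL5 hbr hLD huL hE15 hE

set_option maxHeartbeats 2000000 in
lemma main_aux (a₁ b₁ c₁ a₂ b₂ c₂ δ : ℝ) (hδ : 0 < δ) (hu : 0 ≤ a₁ - a₂) :
    ∃ I₁ I₂ : Set ℝ, I₁.OrdConnected ∧ I₂.OrdConnected ∧
      {s ∈ Set.Icc (-(5 / 2) : ℝ) (5 / 2) |
        |quadF a₁ b₁ c₁ s - quadF a₂ b₂ c₂ s| ≤ δ} = I₁ ∪ I₂ ∧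
      Metric.diam I₁ ≤
        100 * δ / Real.sqrt ((tauQ a₁ b₁ c₁ a₂ b₂ c₂ + δ) * (deltaQ a₁ b₁ c₁ a₂ b₂ c₂ + δ)) ∧
      Metric.diam I₂ ≤
        100 * δ / Real.sqrt ((tauQ a₁ b₁ c₁ a₂ b₂ c₂ + δ) * (deltaQ a₁ b₁ c₁ a₂ b₂ c₂ + δ)) := by
  obtain ⟨u, hudef⟩ : ∃ u : ℝ, u = a₁ - a₂ := ⟨_, rfl⟩
  obtain ⟨v, hvdef⟩ : ∃ v : ℝ, v = b₁ - b₂ := ⟨_, rfl⟩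
  obtain ⟨w, hwdef⟩ : ∃ w : ℝ, w = c₁ - c₂ := ⟨_, rfl⟩
  rw [← hudef] at hu
  have hquad : ∀ s : ℝ, quadF a₁ b₁ c₁ s - quadF a₂ b₂ c₂ s = u*s^2+v*s+w := by
    intro s; rw [quad_diff, hudef, hvdef, hwdef]
  obtain ⟨T, hTdef⟩ : ∃ T : ℝ, T = tauQ a₁ b₁ c₁ a₂ b₂ c₂ := ⟨_, rfl⟩
  obtain ⟨Dl, hDldef⟩ : ∃ Dl : ℝ, Dl = deltaQ a₁ b₁ c₁ a₂ b₂ c₂ := ⟨_, rfl⟩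
  have hT0 : 0 ≤ T := hTdef ▸ tauQ_nonneg a₁ b₁ c₁ a₂ b₂ c₂
  have hD0 : 0 ≤ Dl := hDldef ▸ deltaQ_nonneg a₁ b₁ c₁ a₂ b₂ c₂
  have hDle : ∀ θ : ℝ, -10 ≤ θ → θ ≤ 10 → Dl ≤ |u*θ^2+v*θ+w| + |2*u*θ+v| := by
    intro θ h1 h2
    have h := deltaQ_le a₁ b₁ c₁ a₂ b₂ c₂ θ h1 h2
    rw [← hudef, ← hvdef, ← hwdef] at h
    rw [hDldef]
    exact h
  -- pointwise tau bound, right-branch version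
  have hTleR : ∀ x : ℝ, -(5/2) ≤ x → x ≤ 5/2 → |u*x^2+v*x+w| ≤ δ → 0 ≤ 2*u*x+v →
      T ≤ δ + 14*(2*u*x+v) + 200*u := by
    intro x h1 h2 h3 h4
    rw [hTdef]
    apply Real.iSup_le _ (by positivity)
    rintro ⟨θ, hθ1, hθ2⟩
    have e3 : |2*a₁-2*a₂| = 2*u := by
      rw [show (2*a₁-2*a₂ : ℝ) = 2*u by rw [hudef]; ring, abs_of_nonneg (by linarith)]
    show |quadF a₁ b₁ c₁ θ - quadF a₂ b₂ c₂ θ| + |(2*a₁*(θ:ℝ)+b₁) - (2*a₂*(θ:ℝ)+b₂)| +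
        |2*a₁-2*a₂| ≤ _
    rw [hquad, e3, show (2*a₁*(θ:ℝ)+b₁) - (2*a₂*(θ:ℝ)+b₂) = 2*u*(θ:ℝ)+v by
      rw [hudef, hvdef]; ring]
    exact tau_pt u v w δ x θ hδ hu h1 h2 h3 h4 hθ1 hθ2
  -- pointwise tau bound, left-branch version
  have hTleL : ∀ x : ℝ, -(5/2) ≤ x → x ≤ 5/2 → |u*x^2+v*x+w| ≤ δ → 2*u*x+v ≤ 0 →
      T ≤ δ + 14*(2*u*(-x)+(-v)) + 200*u := by
    intro x h1 h2 h3 h4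
    rw [hTdef]
    have hbr' : 0 ≤ 2*u*(-x)+(-v) := by linarith
    apply Real.iSup_le _ (by positivity)
    rintro ⟨θ, hθ1, hθ2⟩
    have e3 : |2*a₁-2*a₂| = 2*u := by
      rw [show (2*a₁-2*a₂ : ℝ) = 2*u by rw [hudef]; ring, abs_of_nonneg (by linarith)]
    show |quadF a₁ b₁ c₁ θ - quadF a₂ b₂ c₂ θ| + |(2*a₁*(θ:ℝ)+b₁) - (2*a₂*(θ:ℝ)+b₂)| +
        |2*a₁-2*a₂| ≤ _
    rw [hquad, e3, show (2*a₁*(θ:ℝ)+b₁) - (2*a₂*(θ:ℝ)+b₂) = 2*u*(θ:ℝ)+v by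
      rw [hudef, hvdef]; ring]
    have h5 := tau_pt u (-v) w δ (-x) (-(θ:ℝ)) hδ hu (by linarith) (by linarith)
      (by rw [show u*(-x)^2+(-v)*(-x)+w = u*x^2+v*x+w by ring]; exact h3) hbr'
      (by linarith) (by linarith)
    rw [show u*(-(θ:ℝ))^2+(-v)*(-(θ:ℝ))+w = u*(θ:ℝ)^2+v*(θ:ℝ)+w by ring] at h5
    rw [show 2*u*(-(θ:ℝ))+(-v) = -(2*u*(θ:ℝ)+v) by ring, abs_neg] at h5
    exact h5
  -- left-branch delta bound
  have hDleL : ∀ θ : ℝ, -10 ≤ θ → θ ≤ 10 → Dl ≤ |u*θ^2+(-v)*θ+w| + |2*u*θ+(-v)| := by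
    intro θ h1 h2
    have h := hDle (-θ) (by linarith) (by linarith)
    rw [show u*(-θ)^2+v*(-θ)+w = u*θ^2+(-v)*θ+w by ring] at h
    rw [show 2*u*(-θ)+v = -(2*u*θ+(-v)) by ring, abs_neg] at h
    exact h
  have hsqpos : 0 < Real.sqrt ((T+δ)*(Dl+δ)) := by
    apply Real.sqrt_pos.2
    have : 0 < T + δ := by linarith
    have : 0 < Dl + δ := by linarith
    positivity
  -- the two pieces
  refine ⟨{s : ℝ | (-(5/2) ≤ s ∧ s ≤ 5/2) ∧ |u*s^2+v*s+w| ≤ δ ∧ 2*u*s+v ≤ 0},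
    {s : ℝ | (-(5/2) ≤ s ∧ s ≤ 5/2) ∧ |u*s^2+v*s+w| ≤ δ ∧ 0 ≤ 2*u*s+v}, ?_, ?_, ?_, ?_, ?_⟩
  · constructor
    rintro p ⟨⟨hp1, hp2⟩, hp3, hp4⟩ q ⟨⟨hq1, hq2⟩, hq3, hq4⟩ r ⟨hr1, hr2⟩
    obtain ⟨hpa, hpb⟩ := abs_le.mp hp3
    obtain ⟨hqa, hqb⟩ := abs_le.mp hq3
    have hrbr : 2*u*r+v ≤ 0 := by
      nlinarith [mul_nonneg hu (sub_nonneg.2 hr2)]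
    refine ⟨⟨by linarith, by linarith⟩, abs_le.2 ⟨?_, ?_⟩, hrbr⟩
    · -- h r ≥ h q ≥ -δ : q ≥ r, antitone branch
      nlinarith [mul_nonneg (sub_nonneg.2 hr2) (neg_nonneg.2 hq4),
        mul_nonneg hu (sq_nonneg (q - r))]
    · -- h r ≤ h p ≤ δ
      nlinarith [mul_nonneg (sub_nonneg.2 hr1) (neg_nonneg.2 hrbr),
        mul_nonneg hu (sq_nonneg (r - p))]
  · constructor
    rintro p ⟨⟨hp1, hp2⟩, hp3, hp4⟩ q ⟨⟨hq1, hq2⟩, hq3, hq4⟩ r ⟨hr1, hr2⟩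
    obtain ⟨hpa, hpb⟩ := abs_le.mp hp3
    obtain ⟨hqa, hqb⟩ := abs_le.mp hq3
    have hrbr : 0 ≤ 2*u*r+v := by
      nlinarith [mul_nonneg hu (sub_nonneg.2 hr1)]
    refine ⟨⟨by linarith, by linarith⟩, abs_le.2 ⟨?_, ?_⟩, hrbr⟩
    · nlinarith [mul_nonneg (sub_nonneg.2 hr1) hp4,
        mul_nonneg hu (sq_nonneg (r - p))]
    · nlinarith [mul_nonneg (sub_nonneg.2 hr2) hrbr,
        mul_nonneg hu (sq_nonneg (q - r))]
  · ext s
    simp only [Set.mem_sep_iff, Set.mem_Icc, Set.mem_union, Set.mem_setOf_eq, hquad]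
    constructor
    · rintro ⟨h1, h2⟩
      rcases le_total (2*u*s+v) 0 with h | h
      · exact Or.inl ⟨h1, h2, h⟩
      · exact Or.inr ⟨h1, h2, h⟩
    · rintro (⟨h1, h2, _⟩ | ⟨h1, h2, _⟩) <;> exact ⟨h1, h2⟩
  · -- diam of left branch
    rw [← hTdef, ← hDldef]
    apply Metric.diam_le_of_forall_dist_le (by positivity)
    intro p hp q hq
    rcases le_total p q with hpq | hpq
    · rw [Real.dist_eq, abs_of_nonpos (by linarith), neg_sub]
      rw [le_div_iff₀ hsqpos]
      obtain ⟨⟨hp1, hp2⟩, hp3, hp4⟩ := hp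
      obtain ⟨⟨hq1, hq2⟩, hq3, hq4⟩ := hq
      have k := key u (-v) w δ (-q) (-p) T Dl hδ hu (by linarith) (by linarith) (by linarith)
        (by rw [show u*(-q)^2+(-v)*(-q)+w = u*q^2+v*q+w by ring]; exact hq3)
        (by rw [show u*(-p)^2+(-v)*(-p)+w = u*p^2+v*p+w by ring]; exact hp3)
        (by linarith) (hTleL q hq1 hq2 hq3 hq4) hT0 hDleL hD0
      rw [show ((-p) - (-q)) = q - p by ring] at k
      calc (q - p) * Real.sqrt ((T+δ)*(Dl+δ))
          = Real.sqrt ((q-p)^2 * ((T+δ)*(Dl+δ))) := by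
            rw [Real.sqrt_mul (sq_nonneg _), Real.sqrt_sq (by linarith)]
        _ ≤ Real.sqrt (10000*δ^2) := Real.sqrt_le_sqrt k
        _ = 100*δ := by
            rw [show (10000:ℝ)*δ^2 = (100*δ)^2 by ring, Real.sqrt_sq (by positivity)]
    · rw [Real.dist_eq, abs_of_nonneg (by linarith)]
      rw [le_div_iff₀ hsqpos]
      obtain ⟨⟨hp1, hp2⟩, hp3, hp4⟩ := hp
      obtain ⟨⟨hq1, hq2⟩, hq3, hq4⟩ := hq
      have k := key u (-v) w δ (-p) (-q) T Dl hδ hu (by linarith) (by linarith) (by linarith)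
        (by rw [show u*(-p)^2+(-v)*(-p)+w = u*p^2+v*p+w by ring]; exact hp3)
        (by rw [show u*(-q)^2+(-v)*(-q)+w = u*q^2+v*q+w by ring]; exact hq3)
        (by linarith) (hTleL p hp1 hp2 hp3 hp4) hT0 hDleL hD0
      rw [show ((-q) - (-p)) = p - q by ring] at k
      calc (p - q) * Real.sqrt ((T+δ)*(Dl+δ))
          = Real.sqrt ((p-q)^2 * ((T+δ)*(Dl+δ))) := by
            rw [Real.sqrt_mul (sq_nonneg _), Real.sqrt_sq (by linarith)]
        _ ≤ Real.sqrt (10000*δ^2) := Real.sqrt_le_sqrt k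
        _ = 100*δ := by
            rw [show (10000:ℝ)*δ^2 = (100*δ)^2 by ring, Real.sqrt_sq (by positivity)]
  · -- diam of right branch
    rw [← hTdef, ← hDldef]
    apply Metric.diam_le_of_forall_dist_le (by positivity)
    intro p hp q hq
    rcases le_total p q with hpq | hpq
    · rw [Real.dist_eq, abs_of_nonpos (by linarith), neg_sub]
      rw [le_div_iff₀ hsqpos]
      obtain ⟨⟨hp1, hp2⟩, hp3, hp4⟩ := hp
      obtain ⟨⟨hq1, hq2⟩, hq3, hq4⟩ := hq
      have k := key u v w δ p q T Dl hδ hu (by linarith) hpq (by linarith)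
        hp3 hq3 hp4 (hTleR p hp1 hp2 hp3 hp4) hT0 hDle hD0
      calc (q - p) * Real.sqrt ((T+δ)*(Dl+δ))
          = Real.sqrt ((q-p)^2 * ((T+δ)*(Dl+δ))) := by
            rw [Real.sqrt_mul (sq_nonneg _), Real.sqrt_sq (by linarith)]
        _ ≤ Real.sqrt (10000*δ^2) := Real.sqrt_le_sqrt k
        _ = 100*δ := by
            rw [show (10000:ℝ)*δ^2 = (100*δ)^2 by ring, Real.sqrt_sq (by positivity)]
    · rw [Real.dist_eq, abs_of_nonneg (by linarith)]
      rw [le_div_iff₀ hsqpos]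
      obtain ⟨⟨hp1, hp2⟩, hp3, hp4⟩ := hp
      obtain ⟨⟨hq1, hq2⟩, hq3, hq4⟩ := hq
      have k := key u v w δ q p T Dl hδ hu (by linarith) hpq (by linarith)
        hq3 hp3 hq4 (hTleR q hq1 hq2 hq3 hq4) hT0 hDle hD0
      calc (p - q) * Real.sqrt ((T+δ)*(Dl+δ))
          = Real.sqrt ((p-q)^2 * ((T+δ)*(Dl+δ))) := by
            rw [Real.sqrt_mul (sq_nonneg _), Real.sqrt_sq (by linarith)]
        _ ≤ Real.sqrt (10000*δ^2) := Real.sqrt_le_sqrt k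
        _ = 100*δ := by
            rw [show (10000:ℝ)*δ^2 = (100*δ)^2 by ring, Real.sqrt_sq (by positivity)]

/-- For distinct quadratics f, g the set A_δ = {s ∈ [-5/2,5/2] : |f(s)-g(s)| ≤ δ} is a
union of at most two intervals, each of length ≲ δ/√((τ(f,g)+δ)(Δ(f,g)+δ)). -/
theorem intersection_two_intervals :
    ∃ C > (0 : ℝ), ∀ a₁ b₁ c₁ a₂ b₂ c₂ δ : ℝ, 0 < δ →
      (a₁, b₁, c₁) ≠ (a₂, b₂, c₂) →
      ∃ I₁ I₂ : Set ℝ, I₁.OrdConnected ∧ I₂.OrdConnected ∧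
        {s ∈ Set.Icc (-(5 / 2) : ℝ) (5 / 2) |
          |quadF a₁ b₁ c₁ s - quadF a₂ b₂ c₂ s| ≤ δ} = I₁ ∪ I₂ ∧
        Metric.diam I₁ ≤
          C * δ / Real.sqrt ((tauQ a₁ b₁ c₁ a₂ b₂ c₂ + δ) * (deltaQ a₁ b₁ c₁ a₂ b₂ c₂ + δ)) ∧
        Metric.diam I₂ ≤
          C * δ / Real.sqrt ((tauQ a₁ b₁ c₁ a₂ b₂ c₂ + δ) * (deltaQ a₁ b₁ c₁ a₂ b₂ c₂ + δ)) := by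
  
  refine ⟨100, by norm_num, ?_⟩
  intro a₁ b₁ c₁ a₂ b₂ c₂ δ hδ _
  rcases le_total a₂ a₁ with h | h
  · exact main_aux a₁ b₁ c₁ a₂ b₂ c₂ δ hδ (by linarith)
  · obtain ⟨I₁, I₂, h1, h2, h3, h4, h5⟩ := main_aux a₂ b₂ c₂ a₁ b₁ c₁ δ hδ (by linarith)
    have hset : {s ∈ Set.Icc (-(5 / 2) : ℝ) (5 / 2) |
        |quadF a₁ b₁ c₁ s - quadF a₂ b₂ c₂ s| ≤ δ} =
        {s ∈ Set.Icc (-(5 / 2) : ℝ) (5 / 2) |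
        |quadF a₂ b₂ c₂ s - quadF a₁ b₁ c₁ s| ≤ δ} := by
      ext s
      simp only [Set.mem_sep_iff]
      rw [abs_sub_comm]
    rw [hset, tauQ_comm a₁ b₁ c₁ a₂ b₂ c₂, deltaQ_comm a₁ b₁ c₁ a₂ b₂ c₂]
    exact ⟨I₁, I₂, h1, h2, h3, h4, h5⟩
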